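/- arXiv:2004.11935 — 2 statements merged into one kernel-verified Lean document; each statement's English description precedes it below -/
import Mathlib

section
/- Let S, G, Z, Y be nonempty finite types, let p_S be a pmf on S and p_G a pmf on G, let e : S → G → Z → ℝ be an encoder with e s g a pmf on Z and e s g z > 0 for all s, g, z, and let dec : S → Z → Y → ℝ be a decoder with dec s z a pmf on Y and dec s z y > 0 for all s, z, y. Define κ s g y = ∑ z, e s g z * dec s z y, the marginal n s y = ∑ g, p_G g * κ s g y, and I(Y;G|S) = ∑ s, p_S s * ∑ g, p_G g * ∑ y, κ s g y * Real.log (κ s g y / n s y). Then for every pmf r on Z with r z > 0 for all z, I(Y;G|S) ≤ ∑ s, p_S s * ∑ g, p_G g * ∑ z, e s g z * Real.log (e s g z / r z); that is, the mutual information between the output and the privileged input given the standard input is bounded by the expected KL divergence of the encoder to any fixed prior over the bottleneck variable. -/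
lemma log_sum_ineq {ι : Type*} [Fintype ι] [Nonempty ι] (a b : ι → ℝ)
    (ha : ∀ i, 0 < a i) (hb : ∀ i, 0 < b i) :
    (∑ i, a i) * Real.log ((∑ i, a i) / (∑ i, b i)) ≤ ∑ i, a i * Real.log (a i / b i) := by
  set A := ∑ i, a i with hA
  set B := ∑ i, b i with hB
  have hApos : 0 < A := Finset.sum_pos (fun i _ => ha i) Finset.univ_nonempty
  have hBpos : 0 < B := Finset.sum_pos (fun i _ => hb i) Finset.univ_nonempty
  have key : ∀ i, a i - b i * A / B ≤ a i * (Real.log (a i / b i) - Real.log (A / B)) := by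
    intro i
    have hx : 0 < (a i * B) / (b i * A) :=
      div_pos (mul_pos (ha i) hBpos) (mul_pos (hb i) hApos)
    have h1 := Real.one_sub_inv_le_log_of_pos hx
    have hlog : Real.log ((a i * B) / (b i * A))
        = Real.log (a i / b i) - Real.log (A / B) := by
      rw [Real.log_div (mul_pos (ha i) hBpos).ne' (mul_pos (hb i) hApos).ne',
        Real.log_div (ha i).ne' (hb i).ne', Real.log_div hApos.ne' hBpos.ne',
        Real.log_mul (ha i).ne' hBpos.ne', Real.log_mul (hb i).ne' hApos.ne']
      ring
    rw [hlog] at h1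
    have h2 : a i * (1 - ((a i * B) / (b i * A))⁻¹)
        ≤ a i * (Real.log (a i / b i) - Real.log (A / B)) :=
      mul_le_mul_of_nonneg_left h1 (ha i).le
    have h3 : a i * (1 - ((a i * B) / (b i * A))⁻¹) = a i - b i * A / B := by
      rw [mul_sub, mul_one]
      congr 1
      rw [inv_div]
      rw [mul_div_assoc', div_eq_div_iff (mul_pos (ha i) hBpos).ne' hBpos.ne']
      ring
    linarith
  have hsum : ∑ i, (a i - b i * A / B) = 0 := by
    rw [Finset.sum_sub_distrib, ← Finset.sum_div, ← Finset.sum_mul, ← hB, ← hA,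
      mul_comm, mul_div_assoc, div_self hBpos.ne', mul_one, sub_self]
  calc A * Real.log (A / B) = ∑ i, a i * Real.log (A / B) := by rw [← Finset.sum_mul]
    _ ≤ ∑ i, a i * Real.log (a i / b i) := by
        have := Finset.sum_le_sum (fun i (_ : i ∈ Finset.univ) => key i)
        rw [hsum] at this
        simp only [mul_sub] at this
        rw [Finset.sum_sub_distrib] at this
        linarith

/-- Combined bound: the conditional mutual information between the output Y
and the privileged input G given the standard input S is bounded by the
expected KL divergence of the encoder to any fixed positive prior `r` over
the bottleneck variable. -/
theorem output_info_le_variational_kl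
    {S G Z Y : Type*} [Fintype S] [Fintype G] [Fintype Z] [Fintype Y]
    [Nonempty S] [Nonempty G] [Nonempty Z] [Nonempty Y]
    (pS : S → ℝ) (hpS0 : ∀ s, 0 ≤ pS s) (hpS1 : ∑ s, pS s = 1)
    (pG : G → ℝ) (hpG0 : ∀ g, 0 ≤ pG g) (hpG1 : ∑ g, pG g = 1)
    (e : S → G → Z → ℝ) (he0 : ∀ s g z, 0 < e s g z)
    (he1 : ∀ s g, ∑ z, e s g z = 1)
    (dec : S → Z → Y → ℝ) (hdec0 : ∀ s z y, 0 < dec s z y)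
    (hdec1 : ∀ s z, ∑ y, dec s z y = 1)
    (r : Z → ℝ) (hr0 : ∀ z, 0 < r z) (hr1 : ∑ z, r z = 1) :
    ∑ s, pS s * ∑ g, pG g * ∑ y,
        (∑ z, e s g z * dec s z y) *
          Real.log ((∑ z, e s g z * dec s z y) /
            (∑ g', pG g' * ∑ z, e s g' z * dec s z y)) ≤
      ∑ s, pS s * ∑ g, pG g * ∑ z, e s g z * Real.log (e s g z / r z) := by
  -- the mixture over g
  set m : S → Z → ℝ := fun s z => ∑ g', pG g' * e s g' z with hm
  obtain ⟨g₀, hg₀⟩ : ∃ g, 0 < pG g := by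
    by_contra h
    push_neg at h
    have : ∑ g, pG g ≤ 0 := Finset.sum_nonpos (fun g _ => h g)
    rw [hpG1] at this; linarith
  have hm0 : ∀ s z, 0 < m s z := fun s z =>
    Finset.sum_pos' (fun g _ => mul_nonneg (hpG0 g) (he0 s g z).le)
      ⟨g₀, Finset.mem_univ _, mul_pos hg₀ (he0 s g₀ z)⟩
  have hmsum : ∀ s, ∑ z, m s z = 1 := by
    intro s
    simp only [hm]
    rw [Finset.sum_comm]
    simp [← Finset.mul_sum, he1, hpG1]
  have hn : ∀ s y, (∑ g', pG g' * ∑ z, e s g' z * dec s z y)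
      = ∑ z, m s z * dec s z y := by
    intro s y
    simp only [Finset.mul_sum]
    rw [Finset.sum_comm]
    refine Finset.sum_congr rfl fun z _ => ?_
    rw [hm, Finset.sum_mul]
    exact Finset.sum_congr rfl fun g' _ => (mul_assoc _ _ _).symm
  have stepA : ∀ s g,
      (∑ y, (∑ z, e s g z * dec s z y) *
        Real.log ((∑ z, e s g z * dec s z y) /
          (∑ g', pG g' * ∑ z, e s g' z * dec s z y)))
      ≤ ∑ z, e s g z * Real.log (e s g z / m s z) := by
    intro s g
    have hy : ∀ y, (∑ z, e s g z * dec s z y) *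
        Real.log ((∑ z, e s g z * dec s z y) /
          (∑ g', pG g' * ∑ z, e s g' z * dec s z y))
        ≤ ∑ z, (e s g z * dec s z y) * Real.log (e s g z / m s z) := by
      intro y
      rw [hn s y]
      have h := log_sum_ineq (fun z => e s g z * dec s z y)
        (fun z => m s z * dec s z y)
        (fun z => mul_pos (he0 s g z) (hdec0 s z y))
        (fun z => mul_pos (hm0 s z) (hdec0 s z y))
      refine h.trans_eq (Finset.sum_congr rfl fun z _ => ?_)
      rw [mul_div_mul_right _ _ (hdec0 s z y).ne']
    calc (∑ y, (∑ z, e s g z * dec s z y) *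
            Real.log ((∑ z, e s g z * dec s z y) /
              (∑ g', pG g' * ∑ z, e s g' z * dec s z y)))
        ≤ ∑ y, ∑ z, (e s g z * dec s z y) * Real.log (e s g z / m s z) :=
          Finset.sum_le_sum fun y _ => hy y
      _ = ∑ z, e s g z * Real.log (e s g z / m s z) := by
          rw [Finset.sum_comm]
          refine Finset.sum_congr rfl fun z _ => ?_
          have : ∀ y, e s g z * dec s z y * Real.log (e s g z / m s z)
              = (e s g z * Real.log (e s g z / m s z)) * dec s z y := fun y => by ring
          simp_rw [this]
          rw [← Finset.mul_sum, hdec1 s z, mul_one]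
  have stepB : ∀ s,
      ∑ g, pG g * ∑ z, e s g z * Real.log (e s g z / m s z)
      ≤ ∑ g, pG g * ∑ z, e s g z * Real.log (e s g z / r z) := by
    intro s
    have hgibbs : 0 ≤ ∑ z, m s z * Real.log (m s z / r z) := by
      have h := log_sum_ineq (fun z => m s z) r (hm0 s) hr0
      rw [hmsum s, hr1] at h
      simpa using h
    have hdiff : ∑ g, pG g * ∑ z, e s g z * Real.log (e s g z / r z)
        - ∑ g, pG g * ∑ z, e s g z * Real.log (e s g z / m s z)
        = ∑ z, m s z * Real.log (m s z / r z) := by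
      rw [← Finset.sum_sub_distrib]
      have hterm : ∀ g, pG g * ∑ z, e s g z * Real.log (e s g z / r z)
          - pG g * ∑ z, e s g z * Real.log (e s g z / m s z)
          = ∑ z, pG g * e s g z * Real.log (m s z / r z) := by
        intro g
        rw [← mul_sub, ← Finset.sum_sub_distrib, Finset.mul_sum]
        refine Finset.sum_congr rfl fun z _ => ?_
        rw [← mul_sub, Real.log_div (he0 s g z).ne' (hr0 z).ne',
          Real.log_div (he0 s g z).ne' (hm0 s z).ne',
          Real.log_div (hm0 s z).ne' (hr0 z).ne']
        ring
      simp_rw [hterm]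
      rw [Finset.sum_comm]
      refine Finset.sum_congr rfl fun z _ => ?_
      rw [hm, Finset.sum_mul]
    linarith
  refine Finset.sum_le_sum fun s _ => mul_le_mul_of_nonneg_left ?_ (hpS0 s)
  calc ∑ g, pG g * ∑ y,
        (∑ z, e s g z * dec s z y) *
          Real.log ((∑ z, e s g z * dec s z y) /
            (∑ g', pG g' * ∑ z, e s g' z * dec s z y))
      ≤ ∑ g, pG g * ∑ z, e s g z * Real.log (e s g z / m s z) :=
        Finset.sum_le_sum fun g _ => mul_le_mul_of_nonneg_left (stepA s g) (hpG0 g)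
    _ ≤ ∑ g, pG g * ∑ z, e s g z * Real.log (e s g z / r z) := stepB s
end

section
/- Let Z be a nonempty finite type, let r be a pmf on Z with r z > 0 for all z, let z₀ : Z, and let d be a real number with 0 < d < 1. Define the mixture q : Z → ℝ by q z = d * r z + (1 - d) * (if z = z₀ then 1 else 0), i.e., with probability d the bottleneck variable is sampled from the prior r and with probability 1 - d it is deterministically set to the encoder output z₀. Then the KL divergence of the mixture from the prior admits the closed form ∑ z, q z * Real.log (q z / r z) = d * Real.log d * (1 - r z₀) + (d * r z₀ + (1 - d)) * Real.log ((d * r z₀ + (1 - d)) / r z₀). -/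
/-- Closed form for the KL divergence from the prior `r` of the mixture that
samples from `r` with probability `d` and deterministically outputs `z₀` with
probability `1 - d`. -/
theorem kl_mixture_prior_first_closed_form
    {Z : Type*} [Fintype Z] [Nonempty Z] [DecidableEq Z]
    (r : Z → ℝ) (hr0 : ∀ z, 0 < r z) (hr1 : ∑ z, r z = 1)
    (z₀ : Z) (d : ℝ) (hd0 : 0 < d) (hd1 : d < 1) :
    ∑ z, (d * r z + (1 - d) * (if z = z₀ then 1 else 0)) *
        Real.log ((d * r z + (1 - d) * (if z = z₀ then 1 else 0)) / r z) =
      d * Real.log d * (1 - r z₀) +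
        (d * r z₀ + (1 - d)) * Real.log ((d * r z₀ + (1 - d)) / r z₀) := by
  rw [← Finset.sum_erase_add _ _ (Finset.mem_univ z₀)]
  have h1 : ∑ z ∈ Finset.univ.erase z₀,
      (d * r z + (1 - d) * (if z = z₀ then 1 else 0)) *
        Real.log ((d * r z + (1 - d) * (if z = z₀ then 1 else 0)) / r z) =
      ∑ z ∈ Finset.univ.erase z₀, d * r z * Real.log d := by
    refine Finset.sum_congr rfl fun z hz => ?_
    have hne : z ≠ z₀ := Finset.ne_of_mem_erase hz
    simp only [if_neg hne, mul_zero, add_zero]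
    congr 1
    rw [mul_div_assoc, div_self (hr0 z).ne', mul_one]
  have h2 : ∑ z ∈ Finset.univ.erase z₀, r z = 1 - r z₀ := by
    have := Finset.sum_erase_add Finset.univ r (Finset.mem_univ z₀)
    linarith [hr1 ▸ this]
  rw [h1]
  have : ∑ z ∈ Finset.univ.erase z₀, d * r z * Real.log d
      = d * Real.log d * (1 - r z₀) := by
    rw [← Finset.sum_mul, ← Finset.mul_sum, h2]; ring
  rw [this]
  simp
end
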